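/- Let A be a self-adjoint operator with eigenvalues λ_j ≤ 0 on a separable Hilbert space, v ∈ D(A²), and S(z) = a e^z + (1/2)e^{2āz} + ā - z⁻¹(e^z - 1) with a = (1/4)(1 - i/√3). Assume the parabolic smoothing bound ‖A e^{τA}‖ ≤ C/τ. Then ‖S(τA) v‖ ≤ C' τ² ‖A² v‖ for all τ > 0 small, with C' independent of τ and v. -/

import Mathlib

/-!
On the negative real axis `S` is `O(x²)`. Near `0` the order conditions `a + ā = 1/2` and
`a/2 + ā² = 1/6` cancel the constant and linear terms of the Taylor expansion of `S`, leaving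
`z²/6` plus cubic Taylor remainders of `exp z` and `exp (2āz)`; for `x ≤ -1` every term of `S x`
is bounded. Since `S(τA)` acts diagonally, `|S(τλ)| ≤ 4τ²λ²` gives the bound in `ℓ²`.
-/

noncomputable def a : ℂ := (1/4) * (1 - Complex.I / Real.sqrt 3)
noncomputable def abar : ℂ := (1/4) * (1 + Complex.I / Real.sqrt 3)

noncomputable def S (z : ℂ) : ℂ :=
  if z = 0 then 0 else
    a * Complex.exp z + (1/2) * Complex.exp (2 * abar * z) + abar
      - z⁻¹ * (Complex.exp z - 1)

open Complex

lemma a_add_abar : a + abar = 1 / 2 := by unfold a abar; ring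

lemma a_div_two_add_abar_sq : a / 2 + abar ^ 2 = 1 / 6 := by
  have h3 : (Real.sqrt 3 : ℂ) ^ 2 = 3 := by norm_cast; exact Real.sq_sqrt (by norm_num)
  have h3' : (Real.sqrt 3 : ℂ) ≠ 0 := by norm_cast; positivity
  unfold a abar
  field_simp
  linear_combination 12 * I_sq + 4 * h3

lemma norm_I_div_sqrt_three_le : ‖I / Real.sqrt 3‖ ≤ 1 := by
  rw [norm_div, norm_I, norm_real, Real.norm_of_nonneg (Real.sqrt_nonneg 3)]
  exact div_le_one_of_le₀ (Real.one_le_sqrt.mpr (by norm_num)) (Real.sqrt_nonneg 3)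

lemma norm_quarter_mul_one_add_le {s : ℂ} (hs : ‖s‖ ≤ 1) : ‖(1 / 4 : ℂ) * (1 + s)‖ ≤ 1 / 2 := by
  rw [norm_mul]
  have : ‖(1 : ℂ) + s‖ ≤ 2 := (norm_add_le _ _).trans (by rw [norm_one]; linarith)
  norm_num
  linarith

lemma norm_a_le : ‖a‖ ≤ 1 / 2 := by
  rw [a, sub_eq_add_neg]
  exact norm_quarter_mul_one_add_le (by rw [norm_neg]; exact norm_I_div_sqrt_three_le)

lemma norm_abar_le : ‖abar‖ ≤ 1 / 2 := norm_quarter_mul_one_add_le norm_I_div_sqrt_three_le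

lemma abar_re : abar.re = 1 / 4 := by simp [abar]

lemma norm_exp_sub_taylor_two_le {w : ℂ} (hw : ‖w‖ ≤ 1) :
    ‖exp w - (1 + w + w ^ 2 / 2)‖ ≤ 2 / 9 * ‖w‖ ^ 3 := by
  have h := exp_bound hw (by norm_num : 0 < 3)
  norm_num [Finset.sum_range_succ, Nat.factorial] at h
  linarith

lemma S_eq_taylor_remainders {z : ℂ} (hz : z ≠ 0) :
    S z = z ^ 2 / 6 + a * (exp z - (1 + z + z ^ 2 / 2))
      + (1 / 2) * (exp (2 * abar * z) - (1 + 2 * abar * z + (2 * abar * z) ^ 2 / 2))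
      - z⁻¹ * (exp z - (1 + z + z ^ 2 / 2)) := by
  rw [S, if_neg hz]
  linear_combination (1 + z) * a_add_abar + z ^ 2 * a_div_two_add_abar_sq
    - (1 + z / 2) * inv_mul_cancel₀ hz

lemma norm_add_add_sub_le {E : Type*} [SeminormedAddCommGroup E] (p q r s : E) :
    ‖p + q + r - s‖ ≤ ‖p‖ + ‖q‖ + ‖r‖ + ‖s‖ :=
  (norm_sub_le _ _).trans (add_le_add_left norm_add₃_le _)

lemma norm_S_le_sq_of_norm_le_one {z : ℂ} (hz : ‖z‖ ≤ 1) : ‖S z‖ ≤ ‖z‖ ^ 2 := by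
  rcases eq_or_ne z 0 with rfl | hz0
  · simp [S]
  have hw : ‖2 * abar * z‖ ≤ ‖z‖ := by
    rw [norm_mul, norm_mul, Complex.norm_two]
    nlinarith [norm_abar_le, norm_nonneg z]
  have hR1 := norm_exp_sub_taylor_two_le hz
  have hR2 := norm_exp_sub_taylor_two_le (hw.trans hz)
  have hw3 : ‖2 * abar * z‖ ^ 3 ≤ ‖z‖ ^ 3 := pow_le_pow_left₀ (norm_nonneg _) hw 3
  have hz3 : ‖z‖ ^ 3 ≤ ‖z‖ ^ 2 := pow_le_pow_of_le_one (norm_nonneg z) hz (by norm_num)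
  have hzpos : 0 < ‖z‖ := norm_pos_iff.mpr hz0
  rw [S_eq_taylor_remainders hz0]
  set R1 := exp z - (1 + z + z ^ 2 / 2)
  set R2 := exp (2 * abar * z) - (1 + 2 * abar * z + (2 * abar * z) ^ 2 / 2)
  have hinvR1 : ‖z⁻¹ * R1‖ ≤ 2 / 9 * ‖z‖ ^ 2 := by
    rw [norm_mul, norm_inv, inv_mul_le_iff₀ hzpos]
    linarith
  calc ‖z ^ 2 / 6 + a * R1 + 1 / 2 * R2 - z⁻¹ * R1‖
      ≤ ‖z‖ ^ 2 / 6 + ‖a‖ * ‖R1‖ + 1 / 2 * ‖R2‖ + ‖z⁻¹ * R1‖ :=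
        (norm_add_add_sub_le _ _ _ _).trans_eq (by simp)
    _ ≤ ‖z‖ ^ 2 / 6 + 1 / 2 * (2 / 9 * ‖z‖ ^ 3) + 1 / 2 * (2 / 9 * ‖z‖ ^ 3)
          + 2 / 9 * ‖z‖ ^ 2 := by
        gcongr
        · exact norm_a_le
        · linarith
    _ ≤ ‖z‖ ^ 2 := by nlinarith

lemma norm_S_le_of_le_neg_one {x : ℝ} (hx : x ≤ -1) : ‖S x‖ ≤ 4 := by
  have hx0 : (x : ℂ) ≠ 0 := ofReal_ne_zero.mpr (by linarith)
  have hexp : ‖exp x‖ ≤ 1 := by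
    rw [norm_exp, ofReal_re, Real.exp_le_one_iff]; linarith
  have hexp2 : ‖exp (2 * abar * x)‖ ≤ 1 := by
    rw [norm_exp, re_mul_ofReal, Real.exp_le_one_iff]
    simp only [mul_re, re_ofNat, abar_re, im_ofNat, zero_mul, sub_zero]
    linarith
  have hinv : ‖(x : ℂ)⁻¹‖ ≤ 1 := by
    rw [norm_inv, norm_real, Real.norm_eq_abs, abs_of_neg (by linarith)]
    exact inv_le_one_of_one_le₀ (by linarith)
  have hexp_sub : ‖exp x - 1‖ ≤ 2 := (norm_sub_le _ _).trans (by rw [norm_one]; linarith)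
  rw [S, if_neg hx0]
  calc ‖a * exp x + 1 / 2 * exp (2 * abar * x) + abar - (x : ℂ)⁻¹ * (exp x - 1)‖
      ≤ ‖a‖ * ‖exp x‖ + 1 / 2 * ‖exp (2 * abar * x)‖ + ‖abar‖
          + ‖(x : ℂ)⁻¹‖ * ‖exp x - 1‖ :=
        (norm_add_add_sub_le _ _ _ _).trans_eq (by simp)
    _ ≤ 1 / 2 * 1 + 1 / 2 * 1 + 1 / 2 + 1 * 2 := by
        gcongr
        exacts [norm_a_le, norm_abar_le]
    _ ≤ 4 := by norm_num

lemma norm_S_ofReal_le {x : ℝ} (hx : x ≤ 0) : ‖S x‖ ≤ 4 * x ^ 2 := by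
  rcases le_or_gt x (-1) with hx1 | hx1
  · nlinarith [norm_S_le_of_le_neg_one hx1]
  · have hxn : ‖(x : ℂ)‖ ≤ 1 := by
      rw [norm_real, Real.norm_eq_abs, abs_le]; constructor <;> linarith
    calc ‖S x‖ ≤ ‖(x : ℂ)‖ ^ 2 := norm_S_le_sq_of_norm_le_one hxn
      _ = x ^ 2 := by rw [norm_real, Real.norm_eq_abs, sq_abs]
      _ ≤ 4 * x ^ 2 := by nlinarith [sq_nonneg x]

lemma sqrt_tsum_norm_sq_le_of_norm_le {ι E F : Type*} [SeminormedAddCommGroup E]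
    [SeminormedAddCommGroup F] {f : ι → E} {g : ι → F} {K : ℝ} (hK : 0 ≤ K)
    (hfg : ∀ j, ‖f j‖ ≤ K * ‖g j‖) (hg : Summable fun j => ‖g j‖ ^ 2) :
    √(∑' j, ‖f j‖ ^ 2) ≤ K * √(∑' j, ‖g j‖ ^ 2) := by
  have hsq : ∀ j, ‖f j‖ ^ 2 ≤ K ^ 2 * ‖g j‖ ^ 2 := fun j => by
    rw [← mul_pow]; exact pow_le_pow_left₀ (norm_nonneg _) (hfg j) 2
  have hKg := hg.mul_left (K ^ 2)
  calc √(∑' j, ‖f j‖ ^ 2)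
      ≤ √(∑' j, K ^ 2 * ‖g j‖ ^ 2) :=
        Real.sqrt_le_sqrt ((hKg.of_nonneg_of_le (fun j => by positivity) hsq).tsum_le_tsum hsq hKg)
    _ = K * √(∑' j, ‖g j‖ ^ 2) := by
        rw [tsum_mul_left, Real.sqrt_mul (sq_nonneg K), Real.sqrt_sq hK]

theorem stmt15_general (lam : ℕ → ℝ) (hlam : ∀ j, lam j ≤ 0) :
    ∃ C' : ℝ, 0 < C' ∧ ∃ τ₀ : ℝ, 0 < τ₀ ∧
      ∀ (τ : ℝ), 0 < τ → τ ≤ τ₀ → ∀ v : ℕ → ℂ,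
        Summable (fun j => ‖((lam j : ℂ)) ^ 2 * v j‖ ^ 2) →
        Real.sqrt (∑' j, ‖S (τ * lam j) * v j‖ ^ 2)
          ≤ C' * τ ^ 2 * Real.sqrt (∑' j, ‖((lam j : ℂ)) ^ 2 * v j‖ ^ 2) := by
  refine ⟨4, by norm_num, 1, one_pos, fun τ hτ _ v hv => ?_⟩
  refine sqrt_tsum_norm_sq_le_of_norm_le (by positivity) (fun j => ?_) hv
  have hS := norm_S_ofReal_le (mul_nonpos_of_nonneg_of_nonpos hτ.le (hlam j))
  push_cast at hS
  rw [norm_mul, norm_mul, norm_pow, norm_real, Real.norm_eq_abs, sq_abs]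
  calc ‖S (τ * lam j)‖ * ‖v j‖ ≤ 4 * (τ * lam j) ^ 2 * ‖v j‖ := by gcongr
    _ = 4 * τ ^ 2 * (lam j ^ 2 * ‖v j‖) := by ring

/-- Diagonal formulation: `A` self-adjoint with eigenvalues `lam j ≤ 0`, vectors
identified with their coefficient sequences; `S(τA)` acts diagonally by
multiplication by `S(τ lam_j)`. The parabolic smoothing bound
`‖A e^{τA}‖ ≤ C/τ` reads `|lam j| e^{τ lam j} ≤ C/τ`. -/
theorem stmt15 (lam : ℕ → ℝ) (hlam : ∀ j, lam j ≤ 0)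
    (C : ℝ) (hC : 0 < C)
    (hsm : ∀ τ : ℝ, 0 < τ → ∀ j, |lam j| * Real.exp (τ * lam j) ≤ C / τ) :
    ∃ C' : ℝ, 0 < C' ∧ ∃ τ₀ : ℝ, 0 < τ₀ ∧
      ∀ (τ : ℝ), 0 < τ → τ ≤ τ₀ → ∀ v : ℕ → ℂ,
        Summable (fun j => ‖((lam j : ℂ)) ^ 2 * v j‖ ^ 2) →
        Real.sqrt (∑' j, ‖S (τ * lam j) * v j‖ ^ 2)
          ≤ C' * τ ^ 2 * Real.sqrt (∑' j, ‖((lam j : ℂ)) ^ 2 * v j‖ ^ 2) :=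
  stmt15_general lam hlam
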